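/- If ρ = r/s where s is a power of 2, r is odd and 0 < r < s, then for every positive integer e there exists a Boolean function of degree e·s/2 in n = (2s−1)·2^{e−1} − s variables, depending essentially on all n variables, whose proportion of ones is ρ. -/

import Mathlib

/-- The Hamming graph `H(n, α)`: vertices are words of length `n` over `α`,
adjacent iff they differ in exactly one coordinate. -/
def HammingGraph (n : ℕ) (α : Type*) [DecidableEq α] : SimpleGraph (Fin n → α) where
  Adj x y := hammingDist x y = 1
  symm := ⟨fun (x y : Fin n → α) (h : hammingDist x y = 1) => show hammingDist y x = 1 by rwa [hammingDist_comm]⟩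
  loopless := ⟨fun x (h : hammingDist x x = 1) => by rw [hammingDist_self] at h; exact absurd h (by omega)⟩

instance {n : ℕ} {α : Type*} [DecidableEq α] : DecidableRel (HammingGraph n α).Adj :=
  fun x y => inferInstanceAs (Decidable (hammingDist x y = 1))

/-- `f` is a perfect coloring of `G` with quotient matrix `S`: every vertex of
color `i` has exactly `S i j` neighbors of color `j`. -/
def IsPerfectColoring {V K : Type*} [Fintype V] [DecidableEq K] (G : SimpleGraph V)
    [DecidableRel G.Adj] (f : V → K) (S : K → K → ℕ) : Prop :=
  ∀ x : V, ∀ j : K, (Finset.univ.filter (fun y => G.Adj x y ∧ f y = j)).card = S (f x) j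

/-- A function on words depends essentially on its `k`-th argument. -/
def EssentialDep {α K : Type*} {n : ℕ} (f : (Fin n → α) → K) (k : Fin n) : Prop :=
  ∃ x y : Fin n → α, (∀ t, t ≠ k → x t = y t) ∧ f x ≠ f y


/-- A Boolean function `f : {0,1}ⁿ → {0,1}` has degree `d` if its unique multilinear
real-polynomial representation has degree exactly `d`. -/
def HasBooleanDegree {n : ℕ} (f : (Fin n → ZMod 2) → Bool) (d : ℕ) : Prop :=
  ∃ a : Finset (Fin n) → ℝ,
    (∀ x, (if f x then (1 : ℝ) else 0)
        = ∑ T : Finset (Fin n), a T * ∏ i ∈ T, (if x i = 1 then (1 : ℝ) else 0)) ∧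
    (∀ T, a T ≠ 0 → T.card ≤ d) ∧ (∃ T, T.card = d ∧ a T ≠ 0)

/-!
Represent the 0/1 indicator of a Boolean function by its multilinear coefficients. They are given
by a kernel that is a product over coordinates, so for functions of disjoint blocks of variables
the coefficients of a product are products of coefficients, and degrees add.

Every function is built from a dictator and a degree-2 function of three variables with density
1/4 by gadgets whose effect on (variables, degree, density) is explicit: complement
`(n, d, 1 - ρ)`, AND `(n₁ + n₂, d₁ + d₂, ρ₁ρ₂)`, XOR, a multiplexer selecting one of two copies
of `f` by a control of `m` variables and degree `h` `(2n + m, d + h, ρ)`, and a two-variable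
switch `(2n + 2, d + 1, 1/2)`. The top coefficient of each gadget sits on a set of variables where
the other terms of its real form vanish, and each variable is essential because the remaining
blocks can be fixed so that the gadget restricts to a function depending on it.

For `s = 2^(j+2)`, XORs of copies of the switched dictator give a balanced control with `s`
variables and degree `s/2`; induction on `j` (AND with it, followed by a complement when
`r > s/2`) gives `s - 1` variables, degree `s/2` and density `r/s`; `e - 1` multiplexers with this
control then reach the stated parameters. For `s = 2` one iterates the switch from the dictator.
-/

open Finset

namespace BoolCube

section DependsOn

variable {ι κ α β : Type*}

lemma not_dependsOn_compl_singleton {f : (ι → α) → β} {k : ι} :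
    ¬ DependsOn f {k}ᶜ ↔ ∃ x y : ι → α, (∀ t, t ≠ k → x t = y t) ∧ f x ≠ f y := by
  simp [DependsOn]

lemma not_dependsOn_compl_inl {h : (ι ⊕ κ → α) → β} {f : (ι → α) → β} (y : κ → α)
    (hfh : ∀ x, h (Sum.elim x y) = f x) {i : ι} (hf : ¬ DependsOn f {i}ᶜ) :
    ¬ DependsOn h {Sum.inl i}ᶜ := fun hh => hf fun x x' hxx' => by
  rw [← hfh, ← hfh]
  exact hh <| by rintro (t | t) ht <;> simp_all

lemma not_dependsOn_compl_inr {h : (ι ⊕ κ → α) → β} {f : (κ → α) → β} (x : ι → α)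
    (hfh : ∀ y, h (Sum.elim x y) = f y) {j : κ} (hf : ¬ DependsOn f {j}ᶜ) :
    ¬ DependsOn h {Sum.inr j}ᶜ := fun hh => hf fun y y' hyy' => by
  rw [← hfh, ← hfh]
  exact hh <| by rintro (t | t) ht <;> simp_all

lemma exists_eq_of_not_dependsOn {f : (ι → α) → Bool} {s : Set ι} (hf : ¬ DependsOn f s)
    (b : Bool) : ∃ x, f x = b := by
  by_contra! h
  exact hf fun x y _ => (Bool.eq_not_iff.2 (h x)).trans (Bool.eq_not_iff.2 (h y)).symm

end DependsOn

lemma zmod_two_eq_zero_or_one (v : ZMod 2) : v = 0 ∨ v = 1 := by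
  revert v
  decide

lemma sum_zmod_two {M : Type*} [AddCommMonoid M] (φ : ZMod 2 → M) : ∑ v, φ v = φ 0 + φ 1 :=
  Fin.sum_univ_two φ

section BlockMul

variable {ι κ α R : Type*}

def blockMul [Mul R] (F : (ι → α) → R) (G : (κ → α) → R) : (ι ⊕ κ → α) → R :=
  fun z => F (z ∘ Sum.inl) * G (z ∘ Sum.inr)

infixl:70 " ⊠ " => blockMul

lemma sum_blockMul [Fintype ι] [Fintype κ] [Fintype α] [DecidableEq ι] [DecidableEq κ]
    [DecidableEq α] [CommSemiring R] (F : (ι → α) → R) (G : (κ → α) → R) :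
    ∑ z, (F ⊠ G) z = (∑ x, F x) * ∑ y, G y := by
  rw [sum_mul_sum, ← Fintype.sum_prod_type', ← (Equiv.sumArrowEquivProdArrow ι κ α).sum_comp]
  rfl

end BlockMul

section Coefficients

variable {ι κ R : Type*} [Fintype ι] [DecidableEq ι] [Fintype κ] [DecidableEq κ] [CommRing R]

/-- At the indicator of `S ⊆ T` the kernel is `(-1)^#(T \ S)`, and it vanishes at all other
points, so `coeff` is Möbius inversion on subsets of variables; written as a product over
coordinates it factors over blocks of variables (`kernel_eq_blockMul`). -/
def kernel (T : Finset ι) (x : ι → ZMod 2) : R :=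
  ∏ i, if i ∈ T then (if x i = 1 then 1 else -1) else (if x i = 0 then 1 else 0)

def coeff (T : Finset ι) : ((ι → ZMod 2) → R) →ₗ[R] R where
  toFun F := F ⬝ᵥ kernel T
  map_add' F G := add_dotProduct F G _
  map_smul' c F := smul_dotProduct c F _

lemma coeff_apply (T : Finset ι) (F : (ι → ZMod 2) → R) : coeff T F = ∑ x, F x * kernel T x :=
  rfl

def monomial (S : Finset ι) (x : ι → ZMod 2) : R := ∏ i ∈ S, if x i = 1 then 1 else 0

lemma sum_kernel_mul_monomial (x y : ι → ZMod 2) :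
    ∑ T, kernel T y * monomial T x = if y = x then (1 : R) else 0 := by
  have hT (T : Finset ι) : kernel T y * monomial T x
      = (∏ i ∈ T, (if y i = 1 then 1 else -1) * (if x i = 1 then 1 else 0))
        * ∏ i ∈ univ \ T, (if y i = 0 then (1 : R) else 0) := by
    rw [kernel, monomial, prod_ite, filter_univ_mem, ← sdiff_eq_filter, prod_mul_distrib]
    ring
  have hcoord (i : ι) : (if y i = 1 then 1 else -1) * (if x i = 1 then 1 else 0)
      + (if y i = 0 then (1 : R) else 0) = if y i = x i then 1 else 0 := by
    rcases zmod_two_eq_zero_or_one (x i) with h | h <;>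
      rcases zmod_two_eq_zero_or_one (y i) with h' | h' <;> simp [h, h']
  simp_rw [hT, ← powerset_univ, ← prod_add, hcoord, prod_boole]
  simp [funext_iff]

theorem sum_coeff_mul_monomial (F : (ι → ZMod 2) → R) (x : ι → ZMod 2) :
    ∑ T, coeff T F * monomial T x = F x := by
  simp_rw [coeff_apply, sum_mul, mul_assoc]
  rw [sum_comm]
  simp_rw [← mul_sum, sum_kernel_mul_monomial]
  simp only [mul_ite, mul_one, mul_zero, sum_ite_eq', mem_univ, if_true]

theorem coeff_monomial (S T : Finset ι) :
    coeff T (monomial S : (ι → ZMod 2) → R) = if S = T then 1 else 0 := by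
  set g : ι → ZMod 2 → R := fun i v => (if i ∈ S then (if v = 1 then 1 else 0) else 1)
    * (if i ∈ T then (if v = 1 then 1 else -1) else (if v = 0 then 1 else 0))
  have hprod (x : ι → ZMod 2) : monomial S x * kernel T x = ∏ i, g i (x i) := by
    rw [monomial, kernel, ← Fintype.prod_ite_mem S, ← prod_mul_distrib]
  have hcoord (i : ι) : ∑ v, g i v = if (i ∈ S ↔ i ∈ T) then 1 else 0 := by
    rw [sum_zmod_two]
    by_cases hS : i ∈ S <;> by_cases hT : i ∈ T <;> simp [g, hS, hT]
  simp_rw [coeff_apply, hprod, ← Fintype.prod_sum, hcoord, prod_boole, Finset.ext_iff]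
  simp

theorem coeff_one (T : Finset ι) :
    coeff T (1 : (ι → ZMod 2) → R) = if T = ∅ then 1 else 0 := by
  have : (monomial ∅ : (ι → ZMod 2) → R) = 1 := by ext; simp [monomial]
  rw [← this, coeff_monomial]
  simp [eq_comm]

lemma kernel_eq_blockMul (U : Finset (ι ⊕ κ)) :
    (kernel U : (ι ⊕ κ → ZMod 2) → R) = kernel U.toLeft ⊠ kernel U.toRight := by
  ext z
  simp [kernel, blockMul, Fintype.prod_sum_type]

theorem coeff_blockMul (F : (ι → ZMod 2) → R) (G : (κ → ZMod 2) → R) (U : Finset (ι ⊕ κ)) :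
    coeff U (F ⊠ G) = coeff U.toLeft F * coeff U.toRight G := by
  rw [coeff_apply, kernel_eq_blockMul, coeff_apply, coeff_apply, ← sum_blockMul]
  simp only [blockMul]
  exact sum_congr rfl fun z _ => by ring

lemma coeff_comp_equiv (e : κ ≃ ι) (F : (κ → ZMod 2) → R) (T : Finset ι) :
    coeff T (fun x => F (x ∘ e)) = coeff (T.map e.symm.toEmbedding) F := by
  rw [coeff_apply, coeff_apply, ← (e.arrowCongr (Equiv.refl (ZMod 2))).sum_comp]
  refine sum_congr rfl fun y _ => ?_
  simp only [Equiv.arrowCongr_apply, Equiv.coe_refl, Function.id_comp, kernel]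
  congr 1
  · congr 1
    ext j
    simp
  · exact Fintype.prod_equiv e.symm _ _ fun i => by simp

def degreeLE (d : ℕ) : Submodule R ((ι → ZMod 2) → R) :=
  ⨅ (T : Finset ι) (_ : d < #T), LinearMap.ker (coeff T)

lemma mem_degreeLE {F : (ι → ZMod 2) → R} {d : ℕ} :
    F ∈ degreeLE d ↔ ∀ T : Finset ι, d < #T → coeff T F = 0 := by
  simp [degreeLE, Submodule.mem_iInf]

lemma degreeLE_mono {d d' : ℕ} (h : d ≤ d') :
    (degreeLE d : Submodule R ((ι → ZMod 2) → R)) ≤ degreeLE d' :=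
  fun _ hF => mem_degreeLE.2 fun T hT => mem_degreeLE.1 hF T (by omega)

lemma monomial_mem_degreeLE (S : Finset ι) : (monomial S : (ι → ZMod 2) → R) ∈ degreeLE #S :=
  mem_degreeLE.2 fun T hT => by rw [coeff_monomial, if_neg (by rintro rfl; omega)]

lemma one_mem_degreeLE (d : ℕ) : (1 : (ι → ZMod 2) → R) ∈ degreeLE d :=
  mem_degreeLE.2 fun T hT => by rw [coeff_one, if_neg (by rintro rfl; simp at hT)]

lemma blockMul_mem_degreeLE {F : (ι → ZMod 2) → R} {G : (κ → ZMod 2) → R} {d₁ d₂ : ℕ}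
    (hF : F ∈ degreeLE d₁) (hG : G ∈ degreeLE d₂) : F ⊠ G ∈ degreeLE (d₁ + d₂) := by
  refine mem_degreeLE.2 fun U hU => ?_
  rw [coeff_blockMul]
  rw [← card_toLeft_add_card_toRight] at hU
  rcases lt_or_ge d₁ #U.toLeft with h | h
  · rw [mem_degreeLE.1 hF _ h, zero_mul]
  · rw [mem_degreeLE.1 hG _ (by omega), mul_zero]

structure HasDegree (F : (ι → ZMod 2) → R) (d : ℕ) : Prop where
  mem_degreeLE : F ∈ degreeLE d
  exists_coeff_ne_zero : ∃ T : Finset ι, #T = d ∧ coeff T F ≠ 0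

namespace HasDegree

variable {F : (ι → ZMod 2) → R} {G : (κ → ZMod 2) → R} {d d₁ d₂ : ℕ}

lemma one_sub (hF : HasDegree F d) (hd : 1 ≤ d) : HasDegree (1 - F) d := by
  obtain ⟨T, hT, hne⟩ := hF.exists_coeff_ne_zero
  refine ⟨sub_mem (one_mem_degreeLE d) hF.mem_degreeLE, T, hT, ?_⟩
  rwa [map_sub, coeff_one, if_neg (by rintro rfl; simp at hT; omega), zero_sub, neg_ne_zero]

lemma blockMul [NoZeroDivisors R] (hF : HasDegree F d₁) (hG : HasDegree G d₂) :
    HasDegree (F ⊠ G) (d₁ + d₂) := by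
  obtain ⟨T₁, hT₁, hne₁⟩ := hF.exists_coeff_ne_zero
  obtain ⟨T₂, hT₂, hne₂⟩ := hG.exists_coeff_ne_zero
  refine ⟨blockMul_mem_degreeLE hF.mem_degreeLE hG.mem_degreeLE, T₁.disjSum T₂, ?_, ?_⟩
  · rw [card_disjSum, hT₁, hT₂]
  · rw [coeff_blockMul, toLeft_disjSum, toRight_disjSum]
    exact mul_ne_zero hne₁ hne₂

lemma blockMul_one_sub_add [NoZeroDivisors R] [NeZero (2 : R)] (hF : HasDegree F d₁)
    (hG : HasDegree G d₂) (hd₁ : 1 ≤ d₁) (hd₂ : 1 ≤ d₂) :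
    HasDegree (F ⊠ (1 - G) + (1 - F) ⊠ G) (d₁ + d₂) := by
  obtain ⟨T₁, hT₁, hne₁⟩ := hF.exists_coeff_ne_zero
  obtain ⟨T₂, hT₂, hne₂⟩ := hG.exists_coeff_ne_zero
  refine ⟨add_mem (blockMul_mem_degreeLE hF.mem_degreeLE
      (sub_mem (one_mem_degreeLE _) hG.mem_degreeLE))
    (blockMul_mem_degreeLE (sub_mem (one_mem_degreeLE _) hF.mem_degreeLE) hG.mem_degreeLE),
    T₁.disjSum T₂, by rw [card_disjSum, hT₁, hT₂], ?_⟩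
  have h₁ : T₁ ≠ ∅ := by rintro rfl; simp at hT₁; omega
  have h₂ : T₂ ≠ ∅ := by rintro rfl; simp at hT₂; omega
  rw [map_add, coeff_blockMul, coeff_blockMul, toLeft_disjSum, toRight_disjSum, map_sub,
    map_sub, coeff_one, coeff_one, if_neg h₁, if_neg h₂]
  have : (2 : R) * (coeff T₁ F * coeff T₂ G) ≠ 0 :=
    mul_ne_zero two_ne_zero (mul_ne_zero hne₁ hne₂)
  contrapose! this
  linear_combination -this

/-- The real form of `mux` and `switch`. The top coefficient comes from `(F ⊠ 1) ⊠ U`, since the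
other two terms only have coefficients on sets that miss the first copy of `ι`. -/
lemma selector [NoZeroDivisors R] {U V W : (κ → ZMod 2) → R} {h : ℕ} (hF : HasDegree F d)
    (hd : 1 ≤ d) (hU : HasDegree U h) (hV : V ∈ degreeLE h) (hW : W ∈ degreeLE (d + h)) :
    HasDegree (1 ⊠ W + (F ⊠ 1) ⊠ U + (1 ⊠ F) ⊠ V) (d + h) := by
  obtain ⟨T, hT, hne⟩ := hF.exists_coeff_ne_zero
  obtain ⟨S, hS, hneU⟩ := hU.exists_coeff_ne_zero
  have hT₀ : T ≠ ∅ := by rintro rfl; simp at hT; omega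
  have h1 := one_mem_degreeLE (ι := ι) (R := R) 0
  refine ⟨add_mem (add_mem ?_ ?_) ?_, (T.disjSum ∅).disjSum S, by simp [hT, hS], ?_⟩
  · simpa using blockMul_mem_degreeLE (one_mem_degreeLE (ι := ι ⊕ ι) 0) hW
  · simpa using blockMul_mem_degreeLE (blockMul_mem_degreeLE hF.mem_degreeLE h1) hU.mem_degreeLE
  · simpa [add_comm] using blockMul_mem_degreeLE (blockMul_mem_degreeLE h1 hF.mem_degreeLE) hV
  · simp only [map_add, coeff_blockMul, toLeft_disjSum, toRight_disjSum]
    simpa [coeff_one, hT₀] using mul_ne_zero hne hneU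

end HasDegree

end Coefficients

section Gadgets

variable {ι κ : Type*} [Fintype ι] [DecidableEq ι] [Fintype κ] [DecidableEq κ]

def indicator {R : Type*} [Zero R] [One R] (f : (ι → ZMod 2) → Bool) (x : ι → ZMod 2) : R :=
  if f x then 1 else 0

lemma sum_one_eq_two_pow : ∑ _x : ι → ZMod 2, (1 : ℝ) = 2 ^ Fintype.card ι := by
  simp

structure Realizes (f : (ι → ZMod 2) → Bool) (d : ℕ) (ρ : ℝ) : Prop where
  hasDegree : HasDegree (indicator f : (ι → ZMod 2) → ℝ) d
  not_dependsOn : ∀ k, ¬ DependsOn f {k}ᶜ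
  sum_indicator : ∑ x, (indicator f x : ℝ) = ρ * 2 ^ Fintype.card ι

def mux (f : (ι → ZMod 2) → Bool) (c : (κ → ZMod 2) → Bool) (z : (ι ⊕ ι) ⊕ κ → ZMod 2) : Bool :=
  bif c (z ∘ Sum.inr) then f (z ∘ Sum.inl ∘ Sum.inl) else f (z ∘ Sum.inl ∘ Sum.inr)

/-- Replaces `mux` for `s = 2`, where no balanced degree-one control on two variables depends on
both: the flip by `w 0 = 0` cancels the degree-two part in `w`, so the real form is `W + A U + B V`
with `W`, `U`, `V` of degree one. -/
def switchGate (A B : Bool) (w : Fin 2 → ZMod 2) : Bool :=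
  (if w 0 = w 1 then A else B) ^^ decide (w 0 = 0)

def switch (f : (ι → ZMod 2) → Bool) (z : (ι ⊕ ι) ⊕ Fin 2 → ZMod 2) : Bool :=
  switchGate (f (z ∘ Sum.inl ∘ Sum.inl)) (f (z ∘ Sum.inl ∘ Sum.inr)) (z ∘ Sum.inr)

namespace Realizes

variable {f : (ι → ZMod 2) → Bool} {g : (κ → ZMod 2) → Bool} {d d₁ d₂ : ℕ} {ρ ρ₁ ρ₂ : ℝ}

lemma exists_eq (hf : Realizes f d ρ) (hd : 1 ≤ d) (b : Bool) : ∃ x, f x = b := by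
  obtain ⟨T, hT, -⟩ := hf.hasDegree.exists_coeff_ne_zero
  obtain ⟨k, -⟩ := card_pos.1 (hT ▸ hd)
  exact exists_eq_of_not_dependsOn (hf.not_dependsOn k) b

lemma comp_equiv (hg : Realizes g d ρ) (e : κ ≃ ι) : Realizes (fun x => g (x ∘ e)) d ρ where
  hasDegree := by
    obtain ⟨T, hT, hne⟩ := hg.hasDegree.exists_coeff_ne_zero
    refine ⟨mem_degreeLE.2 fun U hU => ?_, T.map e.toEmbedding, by simpa using hT, ?_⟩
    · exact (coeff_comp_equiv e (indicator g) U).trans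
        (mem_degreeLE.1 hg.hasDegree.mem_degreeLE _ (by simpa using hU))
    · refine (coeff_comp_equiv e (indicator g) _).trans_ne ?_
      simpa [map_map] using hne
  not_dependsOn i hi := hg.not_dependsOn (e.symm i) fun y y' hyy' => by
    simpa [Function.comp_assoc] using
      @hi (y ∘ e.symm) (y' ∘ e.symm) fun t ht => hyy' _ (by simpa [e.symm_apply_eq] using ht)
  sum_indicator := by
    rw [← Fintype.card_congr e, ← hg.sum_indicator,
      ← (e.arrowCongr (Equiv.refl (ZMod 2))).symm.sum_comp]
    rfl

lemma not (hf : Realizes f d ρ) (hd : 1 ≤ d) : Realizes (fun x => !f x) d (1 - ρ) := by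
  have hind : (indicator (fun x => !f x) : (ι → ZMod 2) → ℝ) = 1 - indicator f := by
    ext x
    by_cases h : f x <;> simp [indicator, h]
  refine ⟨hind ▸ hf.hasDegree.one_sub hd, fun k hk => hf.not_dependsOn k fun x y hxy => ?_, ?_⟩
  · simpa using hk hxy
  · simp [hind, sum_sub_distrib, hf.sum_indicator]
    ring

lemma and (hf : Realizes f d₁ ρ₁) (hg : Realizes g d₂ ρ₂) (hd₁ : 1 ≤ d₁) (hd₂ : 1 ≤ d₂) :
    Realizes (fun z => f (z ∘ Sum.inl) && g (z ∘ Sum.inr)) (d₁ + d₂) (ρ₁ * ρ₂) := by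
  have hind : (indicator (fun z => f (z ∘ Sum.inl) && g (z ∘ Sum.inr)) : _ → ℝ)
      = indicator f ⊠ indicator g := by
    ext z
    by_cases h₁ : f (z ∘ Sum.inl) <;> by_cases h₂ : g (z ∘ Sum.inr) <;>
      simp [indicator, blockMul, h₁, h₂]
  obtain ⟨x₁, hx₁⟩ := hf.exists_eq hd₁ true
  obtain ⟨y₁, hy₁⟩ := hg.exists_eq hd₂ true
  refine ⟨hind ▸ hf.hasDegree.blockMul hg.hasDegree, ?_, ?_⟩
  · rintro (i | j)
    · exact not_dependsOn_compl_inl y₁ (by simp [hy₁]) (hf.not_dependsOn i)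
    · exact not_dependsOn_compl_inr x₁ (by simp [hx₁]) (hg.not_dependsOn j)
  · rw [hind, sum_blockMul, hf.sum_indicator, hg.sum_indicator, Fintype.card_sum, pow_add]
    ring

lemma xor (hf : Realizes f d₁ ρ₁) (hg : Realizes g d₂ ρ₂) (hd₁ : 1 ≤ d₁) (hd₂ : 1 ≤ d₂) :
    Realizes (fun z => f (z ∘ Sum.inl) ^^ g (z ∘ Sum.inr)) (d₁ + d₂)
      (ρ₁ * (1 - ρ₂) + (1 - ρ₁) * ρ₂) := by
  have hind : (indicator (fun z => f (z ∘ Sum.inl) ^^ g (z ∘ Sum.inr)) : _ → ℝ)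
      = indicator f ⊠ (1 - indicator g) + (1 - indicator f) ⊠ indicator g := by
    ext z
    by_cases h₁ : f (z ∘ Sum.inl) <;> by_cases h₂ : g (z ∘ Sum.inr) <;>
      simp [indicator, blockMul, h₁, h₂]
  obtain ⟨x₀, hx₀⟩ := hf.exists_eq hd₁ false
  obtain ⟨y₀, hy₀⟩ := hg.exists_eq hd₂ false
  refine ⟨hind ▸ hf.hasDegree.blockMul_one_sub_add hg.hasDegree hd₁ hd₂, ?_, ?_⟩
  · rintro (i | j)
    · exact not_dependsOn_compl_inl y₀ (by simp [hy₀]) (hf.not_dependsOn i)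
    · exact not_dependsOn_compl_inr x₀ (by simp [hx₀]) (hg.not_dependsOn j)
  · simp only [hind, Pi.add_apply, Pi.sub_apply, sum_add_distrib, sum_blockMul, sum_sub_distrib,
      Pi.one_apply, sum_one_eq_two_pow, hf.sum_indicator, hg.sum_indicator, Fintype.card_sum,
      pow_add]
    ring

lemma mux {c : (κ → ZMod 2) → Bool} {h : ℕ} {σ : ℝ} (hf : Realizes f d ρ) (hc : Realizes c h σ)
    (hd : 1 ≤ d) (hh : 1 ≤ h) : Realizes (BoolCube.mux f c) (d + h) ρ := by
  have hind : (indicator (BoolCube.mux f c) : _ → ℝ)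
      = 1 ⊠ 0 + (indicator f ⊠ 1) ⊠ indicator c + (1 ⊠ indicator f) ⊠ (1 - indicator c) := by
    ext z
    by_cases h₁ : f (z ∘ Sum.inl ∘ Sum.inl) <;> by_cases h₂ : f (z ∘ Sum.inl ∘ Sum.inr) <;>
      by_cases h₃ : c (z ∘ Sum.inr) <;>
      simp_all [BoolCube.mux, indicator, blockMul, Function.comp_assoc]
  obtain ⟨x₀, hx₀⟩ := hf.exists_eq hd false
  obtain ⟨x₁, hx₁⟩ := hf.exists_eq hd true
  obtain ⟨w₀, hw₀⟩ := hc.exists_eq hh false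
  obtain ⟨w₁, hw₁⟩ := hc.exists_eq hh true
  refine ⟨hind ▸ hf.hasDegree.selector hd hc.hasDegree
    (sub_mem (one_mem_degreeLE h) hc.hasDegree.mem_degreeLE) (zero_mem _), ?_, ?_⟩
  · rintro ((i | i) | j)
    · exact not_dependsOn_compl_inl w₁ (f := fun u => f (u ∘ Sum.inl))
        (by simp [BoolCube.mux, hw₁, ← Function.comp_assoc])
        (not_dependsOn_compl_inl 0 (by simp) (hf.not_dependsOn i))
    · exact not_dependsOn_compl_inl w₀ (f := fun u => f (u ∘ Sum.inr))
        (by simp [BoolCube.mux, hw₀, ← Function.comp_assoc])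
        (not_dependsOn_compl_inr 0 (by simp) (hf.not_dependsOn i))
    · exact not_dependsOn_compl_inr (Sum.elim x₁ x₀)
        (by simp [BoolCube.mux, hx₀, hx₁, ← Function.comp_assoc]) (hc.not_dependsOn j)
  · simp only [hind, Pi.add_apply, Pi.sub_apply, sum_add_distrib, sum_blockMul, sum_sub_distrib,
      Pi.one_apply, Pi.zero_apply, sum_const_zero, sum_one_eq_two_pow, hf.sum_indicator,
      hc.sum_indicator, Fintype.card_sum, pow_add]
    ring

lemma switch (hf : Realizes f d ρ) (hd : 1 ≤ d) :
    Realizes (BoolCube.switch f) (d + 1) (1 / 2) := by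
  have hind : (indicator (BoolCube.switch f) : _ → ℝ) = 1 ⊠ (1 - monomial {0})
      + (indicator f ⊠ 1) ⊠ (monomial {0} + monomial {1} - 1)
      + (1 ⊠ indicator f) ⊠ (monomial {0} - monomial {1}) := by
    ext z
    rcases zmod_two_eq_zero_or_one (z (.inr 0)) with h₀ | h₀ <;>
      rcases zmod_two_eq_zero_or_one (z (.inr 1)) with h₁ | h₁ <;>
      by_cases hA : f (z ∘ Sum.inl ∘ Sum.inl) <;> by_cases hB : f (z ∘ Sum.inl ∘ Sum.inr) <;>
      simp_all [BoolCube.switch, switchGate, indicator, blockMul, monomial, Function.comp_assoc]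
  have hm (i : Fin 2) : (monomial {i} : (Fin 2 → ZMod 2) → ℝ) ∈ degreeLE 1 := by
    simpa using monomial_mem_degreeLE {i}
  have hU : HasDegree (monomial {0} + monomial {1} - 1 : (Fin 2 → ZMod 2) → ℝ) 1 :=
    ⟨sub_mem (add_mem (hm 0) (hm 1)) (one_mem_degreeLE 1), {0}, rfl,
      by simp [coeff_monomial, coeff_one]⟩
  have hsum (i : Fin 2) : ∑ w : Fin 2 → ZMod 2, (monomial {i} w : ℝ) = 2 := by
    simp only [monomial, prod_singleton, sum_boole]
    norm_cast
    fin_cases i <;> decide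
  have hgate : ∀ j, ∃ A B, ¬ DependsOn (switchGate A B) {j}ᶜ := by
    simp only [not_dependsOn_compl_singleton]
    decide
  refine ⟨hind ▸ hf.hasDegree.selector hd hU (sub_mem (hm 0) (hm 1))
    (degreeLE_mono (by omega) (sub_mem (one_mem_degreeLE 1) (hm 0))), ?_, ?_⟩
  · rintro ((i | i) | j)
    · exact not_dependsOn_compl_inl 1 (f := fun u => f (u ∘ Sum.inl))
        (by simp [BoolCube.switch, switchGate, ← Function.comp_assoc])
        (not_dependsOn_compl_inl 0 (by simp) (hf.not_dependsOn i))
    · exact not_dependsOn_compl_inl ![1, 0] (f := fun u => f (u ∘ Sum.inr))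
        (by simp [BoolCube.switch, switchGate, ← Function.comp_assoc])
        (not_dependsOn_compl_inr 0 (by simp) (hf.not_dependsOn i))
    · obtain ⟨A, B, hAB⟩ := hgate j
      obtain ⟨x, hx⟩ := hf.exists_eq hd A
      obtain ⟨y, hy⟩ := hf.exists_eq hd B
      exact not_dependsOn_compl_inr (Sum.elim x y)
        (by simp [BoolCube.switch, hx, hy, ← Function.comp_assoc]) hAB
  · simp only [hind, Pi.add_apply, Pi.sub_apply, sum_add_distrib, sum_blockMul, sum_sub_distrib,
      Pi.one_apply, sum_one_eq_two_pow, hsum, hf.sum_indicator, Fintype.card_sum,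
      Fintype.card_fin, pow_add]
    ring

end Realizes

end Gadgets

def Realizable (n d : ℕ) (ρ : ℝ) : Prop :=
  ∃ f : (Fin n → ZMod 2) → Bool, Realizes f d ρ

section OnFin

variable {ι : Type*} [Fintype ι] [DecidableEq ι] {n d : ℕ} {ρ : ℝ}

namespace Realizes

variable {f : (ι → ZMod 2) → Bool}

lemma realizable (hf : Realizes f d ρ) : Realizable (Fintype.card ι) d ρ :=
  ⟨_, hf.comp_equiv (Fintype.equivFin ι)⟩

lemma hasBooleanDegree {f : (Fin n → ZMod 2) → Bool} (hf : Realizes f d ρ) :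
    HasBooleanDegree f d :=
  ⟨fun T => coeff T (indicator f), fun x => (sum_coeff_mul_monomial (indicator f) x).symm,
    fun T hT => not_lt.1 fun h => hT (mem_degreeLE.1 hf.hasDegree.mem_degreeLE T h),
    hf.hasDegree.exists_coeff_ne_zero⟩

lemma card_filter_mul {r s : ℕ} (hf : Realizes f d (r / s)) (hs : s ≠ 0) :
    #{x | f x = true} * s = r * 2 ^ Fintype.card ι := by
  have := hf.sum_indicator
  simp only [indicator, sum_boole] at this
  field_simp at this
  exact_mod_cast this

end Realizes

namespace Realizable

variable {a b d₁ d₂ : ℕ} {ρ₁ ρ₂ : ℝ}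

lemma not (hf : Realizable n d ρ) (hd : 1 ≤ d) : Realizable n d (1 - ρ) := by
  obtain ⟨f, hf⟩ := hf
  simpa using (hf.not hd).realizable

lemma and (hf : Realizable a d₁ ρ₁) (hg : Realizable b d₂ ρ₂) (hd₁ : 1 ≤ d₁) (hd₂ : 1 ≤ d₂) :
    Realizable (a + b) (d₁ + d₂) (ρ₁ * ρ₂) := by
  obtain ⟨f, hf⟩ := hf
  obtain ⟨g, hg⟩ := hg
  simpa using (hf.and hg hd₁ hd₂).realizable

lemma xor (hf : Realizable a d₁ ρ₁) (hg : Realizable b d₂ ρ₂) (hd₁ : 1 ≤ d₁) (hd₂ : 1 ≤ d₂) :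
    Realizable (a + b) (d₁ + d₂) (ρ₁ * (1 - ρ₂) + (1 - ρ₁) * ρ₂) := by
  obtain ⟨f, hf⟩ := hf
  obtain ⟨g, hg⟩ := hg
  simpa using (hf.xor hg hd₁ hd₂).realizable

lemma mux {s h : ℕ} {σ : ℝ} (hf : Realizable n d ρ) (hc : Realizable s h σ) (hd : 1 ≤ d)
    (hh : 1 ≤ h) : Realizable (n + n + s) (d + h) ρ := by
  obtain ⟨f, hf⟩ := hf
  obtain ⟨c, hc⟩ := hc
  simpa using (hf.mux hc hd hh).realizable

lemma switch (hf : Realizable n d ρ) (hd : 1 ≤ d) : Realizable (n + n + 2) (d + 1) (1 / 2) := by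
  obtain ⟨f, hf⟩ := hf
  simpa using (hf.switch hd).realizable

lemma iterate {m s h : ℕ}
    (step : ∀ n d, 1 ≤ d → Realizable n d ρ → Realizable (n + n + s) (d + h) ρ)
    (hm : Realizable m d ρ) (hd : 1 ≤ d) (t : ℕ) :
    Realizable (2 ^ t * (m + s) - s) (d + t * h) ρ := by
  induction t with
  | zero => simpa using hm
  | succ t ih =>
    convert step _ _ (by omega) ih using 1
    · have : s ≤ 2 ^ t * (m + s) := le_mul_of_one_le_of_le Nat.one_le_two_pow (by omega)
      rw [pow_succ, mul_right_comm]
      omega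
    · ring

end Realizable

end OnFin

lemma realizable_dictator : Realizable 1 1 (1 / 2) := by
  refine ⟨fun x => x 0 = 1, ⟨?_, fun k => ?_, ?_⟩⟩
  · have : (indicator (fun x : Fin 1 → ZMod 2 => x 0 = 1) : _ → ℝ) = monomial {0} := by
      ext x
      simp [indicator, monomial]
    rw [this]
    exact ⟨by simpa using monomial_mem_degreeLE (R := ℝ) ({0} : Finset (Fin 1)), {0}, rfl,
      by simp [coeff_monomial]⟩
  · rw [not_dependsOn_compl_singleton]
    revert k
    decide
  · simp only [indicator, sum_boole]
    norm_num
    norm_cast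

lemma realizable_three : Realizable 3 2 (1 / 4) := by
  refine ⟨fun x => x 0 = x 1 ∧ x 2 ≠ x 0, ⟨?_, fun k => ?_, ?_⟩⟩
  · have : (indicator (fun x : Fin 3 → ZMod 2 => x 0 = x 1 ∧ x 2 ≠ x 0) : _ → ℝ)
        = monomial {0, 1} + monomial {2} - monomial {0, 2} - monomial {1, 2} := by
      ext x
      rcases zmod_two_eq_zero_or_one (x 0) with h₀ | h₀ <;>
        rcases zmod_two_eq_zero_or_one (x 1) with h₁ | h₁ <;>
        rcases zmod_two_eq_zero_or_one (x 2) with h₂ | h₂ <;>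
        simp [indicator, monomial, h₀, h₁, h₂]
    have hmem (S : Finset (Fin 3)) (hS : #S ≤ 2) : (monomial S : _ → ℝ) ∈ degreeLE 2 :=
      degreeLE_mono hS (monomial_mem_degreeLE S)
    rw [this]
    refine ⟨sub_mem (sub_mem (add_mem (hmem _ (by decide)) (hmem _ (by decide)))
      (hmem _ (by decide))) (hmem _ (by decide)), {0, 1}, rfl, ?_⟩
    simp +decide [coeff_monomial]
  · rw [not_dependsOn_compl_singleton]
    revert k
    decide
  · simp only [indicator, sum_boole]
    norm_num
    norm_cast

lemma realizable_balanced (j : ℕ) : Realizable (2 ^ (j + 2)) (2 ^ (j + 1)) (1 / 2) := by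
  induction j with
  | zero => simpa using realizable_dictator.switch le_rfl
  | succ j ih => convert ih.xor ih Nat.one_le_two_pow Nat.one_le_two_pow using 1 <;> ring

lemma realizable_odd (j r : ℕ) (hr : Odd r) (hrs : r < 2 ^ (j + 2)) :
    Realizable (2 ^ (j + 2) - 1) (2 ^ (j + 1)) (r / 2 ^ (j + 2)) := by
  induction j generalizing r with
  | zero =>
    obtain rfl | rfl : r = 1 ∨ r = 3 := by
      obtain ⟨k, rfl⟩ := hr
      omega
    · convert realizable_three using 1 <;> norm_num
    · convert realizable_three.not (by norm_num) using 1 <;> norm_num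
  | succ j ih =>
    have hs : 2 ^ (j + 1 + 2) = 2 * 2 ^ (j + 2) := by ring
    have hd : 1 ≤ 2 ^ (j + 1) := Nat.one_le_two_pow
    have hQ := realizable_balanced j
    have hr₀ : r ≠ 2 ^ (j + 2) := by
      rintro rfl
      exact Nat.not_even_iff_odd.2 hr (Nat.even_pow.2 ⟨even_two, by omega⟩)
    rcases lt_or_gt_of_ne hr₀ with hlt | hgt
    · convert (ih r hr hlt).and hQ hd hd using 1
      · omega
      · ring
      · field_simp
        ring
    · have hr' : Odd (2 * 2 ^ (j + 2) - r) := Nat.Even.sub_odd (by omega) (even_two_mul _) hr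
      convert ((ih _ hr' (by omega)).and hQ hd hd).not (by omega) using 1
      · omega
      · ring
      · rw [Nat.cast_sub (by omega)]
        push_cast
        field_simp
        ring

lemma realizable_of_odd_lt_two_pow (k r e : ℕ) (hr : Odd r) (hrk : r < 2 ^ k) (he : 0 < e) :
    Realizable ((2 * 2 ^ k - 1) * 2 ^ (e - 1) - 2 ^ k) (e * 2 ^ k / 2) (r / (2 ^ k : ℕ)) := by
  obtain ⟨t, rfl⟩ : ∃ t, e = t + 1 := ⟨e - 1, by omega⟩
  rcases k with _ | _ | j
  · obtain ⟨m, rfl⟩ := hr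
    omega
  · obtain rfl : r = 1 := by
      obtain ⟨m, rfl⟩ := hr
      omega
    convert realizable_dictator.iterate (fun _ _ hd hf => hf.switch hd) le_rfl t
      using 1 <;> norm_num <;> omega
  · convert (realizable_odd j r hr hrk).iterate
      (fun _ _ hd hf => hf.mux (realizable_balanced j) hd Nat.one_le_two_pow)
      Nat.one_le_two_pow t using 1
    · have : 1 ≤ 2 ^ (j + 2) := Nat.one_le_two_pow
      rw [Nat.add_sub_cancel, mul_comm]
      generalize 2 ^ (j + 2) = S at *
      congr 2
      omega
    · rw [pow_succ 2 (j + 1), ← mul_assoc, Nat.mul_div_cancel _ two_pos]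
      ring
    · push_cast
      ring

end BoolCube

theorem stmt17_general (r s : ℕ) (hs : ∃ k, s = 2 ^ k) (hr : Odd r) (hrs : r < s)
    (e : ℕ) (he : 0 < e) (n : ℕ) (hn : n = (2 * s - 1) * 2 ^ (e - 1) - s) :
    ∃ f : (Fin n → ZMod 2) → Bool,
      HasBooleanDegree f (e * s / 2) ∧
      (∀ k, EssentialDep f k) ∧
      (Finset.univ.filter fun x => f x = true).card * s = r * 2 ^ n := by
  obtain ⟨k, rfl⟩ := hs
  subst hn
  obtain ⟨f, hf⟩ := BoolCube.realizable_of_odd_lt_two_pow k r e hr hrs he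
  exact ⟨f, hf.hasBooleanDegree,
    fun k => BoolCube.not_dependsOn_compl_singleton.1 (hf.not_dependsOn k),
    by simpa using hf.card_filter_mul (by positivity)⟩

/-- If `ρ = r/s` with `s` a power of 2, `r` odd, `0 < r < s`, then for every `e ≥ 1`
there is a Boolean function of degree `e·s/2` in `n = (2s-1)·2^{e-1} - s` variables,
essentially depending on all variables, whose density of ones is `ρ`. -/
theorem stmt17 (r s : ℕ) (hs : ∃ k, s = 2 ^ k) (hr : Odd r) (h0 : 0 < r) (hrs : r < s)
    (e : ℕ) (he : 0 < e) (n : ℕ) (hn : n = (2 * s - 1) * 2 ^ (e - 1) - s) :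
    ∃ f : (Fin n → ZMod 2) → Bool,
      HasBooleanDegree f (e * s / 2) ∧
      (∀ k, EssentialDep f k) ∧
      (Finset.univ.filter fun x => f x = true).card * s = r * 2 ^ n :=
  stmt17_general r s hs hr hrs e he n hn
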